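/- The function f₁(r) = r'² K(r) / E(r) is strictly decreasing on (0,1), and it maps (0,1) onto (0,1). -/

import Mathlib

open Real Set Filter

/-- Complete elliptic integral of the first kind. -/
noncomputable def K (r : ℝ) : ℝ :=
  ∫ θ in (0:ℝ)..(π/2), 1 / Real.sqrt (1 - r^2 * Real.sin θ ^ 2)

/-- Complete elliptic integral of the second kind. -/
noncomputable def E (r : ℝ) : ℝ :=
  ∫ θ in (0:ℝ)..(π/2), Real.sqrt (1 - r^2 * Real.sin θ ^ 2)

/-- Complementary complete elliptic integral of the first kind: `K'(r) = K(√(1-r²))`. -/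
noncomputable def K' (r : ℝ) : ℝ := K (Real.sqrt (1 - r^2))

/-- Complementary complete elliptic integral of the second kind: `E'(r) = E(√(1-r²))`. -/
noncomputable def E' (r : ℝ) : ℝ := E (Real.sqrt (1 - r^2))

/-- The special function `m(r) = (2/π) r'² K(r) K'(r)` (here `r'² = 1 - r²`). -/
noncomputable def m (r : ℝ) : ℝ := (2/π) * (1 - r^2) * K r * K' r

/-!
Differentiating under the integral sign gives Legendre's formulas `dE/dr = (E - K)/r` and
`dK/dr = (E - r'²K)/(r r'²)`, the latter after integrating `d/dθ (sin θ cos θ / √(1 - r² sin² θ))`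
over `[0, π/2]`. Hence `f₁' = (E (E - K) + K (r'²K - E)) / (r E²) < 0`, because comparing integrands
gives `r'²K < E < K`. For the range, `E ≥ 1` and `K ≤ π/(2r')` squeeze `r'² ≤ f₁ ≤ (π/2) r'`, so
`f₁` tends to `1` at `0` and to `0` at `1`, and by continuity it takes every value in between.
-/
open Topology MeasureTheory

lemma sq_mul_sin_sq_mem_Icc {x c : ℝ} (hx : |x| ≤ c) (θ : ℝ) :
    x ^ 2 * sin θ ^ 2 ∈ Icc 0 (c ^ 2) := by
  refine ⟨by positivity, ?_⟩
  calc x ^ 2 * sin θ ^ 2 ≤ |x| ^ 2 * 1 := by rw [sq_abs]; gcongr; exact sin_sq_le_one θ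
    _ ≤ c ^ 2 := by rw [mul_one]; gcongr

lemma sq_mul_sin_sq_lt_one {x : ℝ} (hx : |x| < 1) (θ : ℝ) : x ^ 2 * sin θ ^ 2 < 1 :=
  (sq_mul_sin_sq_mem_Icc le_rfl θ).2.trans_lt (pow_lt_one₀ (abs_nonneg x) hx two_ne_zero)

lemma continuous_comp_sq_mul_sin_sq {g : ℝ → ℝ} (hg : ContinuousOn g (Iio 1)) {x : ℝ}
    (hx : |x| < 1) : Continuous fun θ => g (x ^ 2 * sin θ ^ 2) :=
  hg.comp_continuous (by fun_prop) (sq_mul_sin_sq_lt_one hx)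

theorem hasDerivAt_integral_comp_sq_mul_sin_sq {g g' : ℝ → ℝ}
    (hg : ∀ u < 1, HasDerivAt g (g' u) u) (hg' : ContinuousOn g' (Iio 1)) (a b : ℝ) {r : ℝ}
    (hr : |r| < 1) :
    HasDerivAt (fun x => ∫ θ in a..b, g (x ^ 2 * sin θ ^ 2))
      (∫ θ in a..b, 2 * r * sin θ ^ 2 * g' (r ^ 2 * sin θ ^ 2)) r := by
  have hgc : ContinuousOn g (Iio 1) := fun u hu => (hg u hu).continuousAt.continuousWithinAt
  obtain ⟨c, hrc, hc1⟩ := exists_between hr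
  have hball : ∀ x ∈ Metric.ball r (c - |r|), |x| < c := fun x hx => by
    rw [Metric.mem_ball, dist_eq] at hx
    linarith [abs_sub_abs_le_abs_sub x r]
  have hIcc : Icc 0 (c ^ 2) ⊆ Iio 1 := fun u hu =>
    hu.2.trans_lt (pow_lt_one₀ ((abs_nonneg r).trans hrc.le) hc1 two_ne_zero)
  obtain ⟨C, hC⟩ := isCompact_Icc.exists_bound_of_continuousOn (hg'.mono hIcc)
  have hs : Metric.ball r (c - |r|) ∈ 𝓝 r := Metric.ball_mem_nhds r (by linarith)
  refine (intervalIntegral.hasDerivAt_integral_of_dominated_loc_of_deriv_le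
    (F := fun x θ => g (x ^ 2 * sin θ ^ 2))
    (F' := fun x θ => 2 * x * sin θ ^ 2 * g' (x ^ 2 * sin θ ^ 2)) (bound := fun _ => 2 * c * C) hs
    ?_ ?_ ?_ ?_ intervalIntegrable_const ?_).2
  · filter_upwards [hs] with x hx
    exact (continuous_comp_sq_mul_sin_sq hgc ((hball x hx).trans hc1)).aestronglyMeasurable
  · exact (continuous_comp_sq_mul_sin_sq hgc hr).intervalIntegrable _ _
  · exact ((by fun_prop : Continuous fun θ => 2 * r * sin θ ^ 2).mul
      (continuous_comp_sq_mul_sin_sq hg' hr)).aestronglyMeasurable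
  · refine ae_of_all _ fun θ _ x hx => ?_
    have hgx := hC _ (sq_mul_sin_sq_mem_Icc (hball x hx).le θ)
    calc ‖2 * x * sin θ ^ 2 * g' (x ^ 2 * sin θ ^ 2)‖
        = 2 * |x| * sin θ ^ 2 * ‖g' (x ^ 2 * sin θ ^ 2)‖ := by
          simp only [norm_mul, Real.norm_eq_abs, abs_two, abs_pow, sq_abs]
      _ ≤ 2 * c * 1 * C := by
          have hc0 : 0 ≤ c := (abs_nonneg r).trans hrc.le
          gcongr
          · exact (hball x hx).le
          · exact sin_sq_le_one θ
      _ = 2 * c * C := by ring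
  · refine ae_of_all _ fun θ _ x hx => ?_
    have hx2 : HasDerivAt (fun x => x ^ 2 * sin θ ^ 2) (2 * x * sin θ ^ 2) x := by
      simpa using (hasDerivAt_pow 2 x).mul_const (sin θ ^ 2)
    have := (hg _ (hIcc (sq_mul_sin_sq_mem_Icc (hball x hx).le θ))).comp x hx2
    rwa [mul_comm] at this

lemma hasDerivAt_sqrt_one_sub {u : ℝ} (hu : u < 1) :
    HasDerivAt (fun u => √(1 - u)) (-(1 / (2 * √(1 - u)))) u := by
  have h := ((hasDerivAt_id u).const_sub 1).sqrt (sub_pos.2 hu).ne'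
  rwa [neg_div] at h

lemma hasDerivAt_one_div_sqrt_one_sub {u : ℝ} (hu : u < 1) :
    HasDerivAt (fun u => 1 / √(1 - u)) (1 / (2 * (1 - u) * √(1 - u))) u := by
  have hs : 0 < √(1 - u) := sqrt_pos.2 (sub_pos.2 hu)
  refine ((hasDerivAt_const u (1 : ℝ)).div (hasDerivAt_sqrt_one_sub hu) hs.ne').congr_deriv ?_
  rw [sq_sqrt (sub_pos.2 hu).le]
  field_simp
  ring

lemma one_sub_sq_pos {r : ℝ} (hr : |r| < 1) : 0 < 1 - r ^ 2 :=
  sub_pos.2 ((sq_lt_one_iff_abs_lt_one r).2 hr)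

lemma one_sub_sq_mul_sin_sq_pos {r : ℝ} (hr : |r| < 1) (θ : ℝ) : 0 < 1 - r ^ 2 * sin θ ^ 2 :=
  sub_pos.2 (sq_mul_sin_sq_lt_one hr θ)

lemma continuous_one_div_sqrt_one_sub_sq_mul_sin_sq {r : ℝ} (hr : |r| < 1) :
    Continuous fun θ => 1 / √(1 - r ^ 2 * sin θ ^ 2) :=
  continuous_const.div (by fun_prop) fun θ => (sqrt_pos.2 (one_sub_sq_mul_sin_sq_pos hr θ)).ne'

theorem hasDerivAt_E {r : ℝ} (hr0 : r ≠ 0) (hr : |r| < 1) :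
    HasDerivAt E ((E r - K r) / r) r := by
  have hg' : ContinuousOn (fun u : ℝ => -(1 / (2 * √(1 - u)))) (Iio 1) :=
    (continuousOn_const.div (by fun_prop) fun u hu =>
      (mul_pos two_pos (sqrt_pos.2 (sub_pos.2 hu))).ne').neg
  have h : HasDerivAt E _ r :=
    hasDerivAt_integral_comp_sq_mul_sin_sq (fun u hu => hasDerivAt_sqrt_one_sub hu) hg' 0 (π / 2) hr
  refine h.congr_deriv ?_
  rw [E, K, ← intervalIntegral.integral_sub ((by fun_prop : Continuous _).intervalIntegrable _ _)
    ((continuous_one_div_sqrt_one_sub_sq_mul_sin_sq hr).intervalIntegrable _ _),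
    ← intervalIntegral.integral_div]
  refine intervalIntegral.integral_congr fun θ _ => ?_
  have hq := one_sub_sq_mul_sin_sq_pos hr θ
  field_simp
  rw [sq_sqrt hq.le]
  ring

lemma hasDerivAt_sin_mul_cos_div_sqrt {r : ℝ} (hr : |r| < 1) (θ : ℝ) :
    HasDerivAt (fun θ => sin θ * cos θ / √(1 - r ^ 2 * sin θ ^ 2))
      (cos θ ^ 2 / √(1 - r ^ 2 * sin θ ^ 2) -
        (1 - r ^ 2) * (sin θ ^ 2 / ((1 - r ^ 2 * sin θ ^ 2) * √(1 - r ^ 2 * sin θ ^ 2)))) θ := by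
  have hq := one_sub_sq_mul_sin_sq_pos hr θ
  have hq' : HasDerivAt (fun θ => 1 - r ^ 2 * sin θ ^ 2) (-(r ^ 2 * (2 * sin θ * cos θ))) θ := by
    simpa using (((hasDerivAt_sin θ).pow 2).const_mul (r ^ 2)).const_sub 1
  have hsc : HasDerivAt (fun θ => sin θ * cos θ) (cos θ * cos θ + sin θ * -sin θ) θ :=
    (hasDerivAt_sin θ).mul (hasDerivAt_cos θ)
  have hs : 0 < √(1 - r ^ 2 * sin θ ^ 2) := sqrt_pos.2 hq
  refine (hsc.div (hq'.sqrt hq.ne') hs.ne').congr_deriv ?_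
  have hs2 := sq_sqrt hq.le
  set s := √(1 - r ^ 2 * sin θ ^ 2)
  rw [← hs2]
  field_simp
  linear_combination sin θ ^ 2 * r ^ 2 * sin_sq_add_cos_sq θ - sin θ ^ 2 * hs2

lemma integral_cos_sq_div_sqrt {r : ℝ} (hr : |r| < 1) :
    ∫ θ in (0 : ℝ)..π / 2, cos θ ^ 2 / √(1 - r ^ 2 * sin θ ^ 2) =
      (1 - r ^ 2) * ∫ θ in (0 : ℝ)..π / 2,
        sin θ ^ 2 / ((1 - r ^ 2 * sin θ ^ 2) * √(1 - r ^ 2 * sin θ ^ 2)) := by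
  have hq := one_sub_sq_mul_sin_sq_pos hr
  have h₁ : Continuous fun θ => cos θ ^ 2 / √(1 - r ^ 2 * sin θ ^ 2) := by
    fun_prop (disch := intro θ; have := hq θ; positivity)
  have h₂ : Continuous fun θ =>
      sin θ ^ 2 / ((1 - r ^ 2 * sin θ ^ 2) * √(1 - r ^ 2 * sin θ ^ 2)) := by
    fun_prop (disch := intro θ; have := hq θ; positivity)
  have hftc := intervalIntegral.integral_eq_sub_of_hasDerivAt
    (fun θ _ => hasDerivAt_sin_mul_cos_div_sqrt hr θ)
    ((h₁.sub (h₂.const_mul (1 - r ^ 2))).intervalIntegrable 0 (π / 2))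
  rw [intervalIntegral.integral_sub (h₁.intervalIntegrable _ _)
    ((h₂.const_mul (1 - r ^ 2)).intervalIntegrable _ _),
    intervalIntegral.integral_const_mul] at hftc
  simp only [sin_pi_div_two, cos_pi_div_two, sin_zero, mul_zero, zero_mul, zero_div, sub_zero]
    at hftc
  linarith

theorem hasDerivAt_K {r : ℝ} (hr0 : r ≠ 0) (hr : |r| < 1) :
    HasDerivAt K ((E r - (1 - r ^ 2) * K r) / (r * (1 - r ^ 2))) r := by
  have hg' : ContinuousOn (fun u : ℝ => 1 / (2 * (1 - u) * √(1 - u))) (Iio 1) :=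
    continuousOn_const.div (by fun_prop) fun u hu => by
      have : 0 < 1 - u := sub_pos.2 hu
      positivity
  have h : HasDerivAt K _ r := hasDerivAt_integral_comp_sq_mul_sin_sq
    (fun u hu => hasDerivAt_one_div_sqrt_one_sub hu) hg' 0 (π / 2) hr
  refine h.congr_deriv ?_
  have hq := one_sub_sq_mul_sin_sq_pos hr
  have hr2 : 1 - r ^ 2 ≠ 0 := (one_sub_sq_pos hr).ne'
  have hEK : E r - (1 - r ^ 2) * K r =
      r ^ 2 * ∫ θ in (0 : ℝ)..π / 2, cos θ ^ 2 / √(1 - r ^ 2 * sin θ ^ 2) := by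
    rw [E, K, ← intervalIntegral.integral_const_mul, ← intervalIntegral.integral_const_mul,
      ← intervalIntegral.integral_sub ((by fun_prop : Continuous _).intervalIntegrable _ _)
        (((continuous_one_div_sqrt_one_sub_sq_mul_sin_sq hr).const_mul _).intervalIntegrable _ _)]
    refine intervalIntegral.integral_congr fun θ _ => ?_
    have hs2 := sq_sqrt (hq θ).le
    have hs := sqrt_pos.2 (hq θ)
    set s := √(1 - r ^ 2 * sin θ ^ 2)
    field_simp
    linear_combination hs2 - r ^ 2 * sin_sq_add_cos_sq θ
  have hK' : (∫ θ in (0 : ℝ)..π / 2,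
      2 * r * sin θ ^ 2 * (1 / (2 * (1 - r ^ 2 * sin θ ^ 2) * √(1 - r ^ 2 * sin θ ^ 2)))) =
      r * ∫ θ in (0 : ℝ)..π / 2,
        sin θ ^ 2 / ((1 - r ^ 2 * sin θ ^ 2) * √(1 - r ^ 2 * sin θ ^ 2)) := by
    rw [← intervalIntegral.integral_const_mul]
    refine intervalIntegral.integral_congr fun θ _ => ?_
    have := hq θ
    field_simp
  rw [hK', hEK, integral_cos_sq_div_sqrt hr]
  field_simp

theorem one_le_E {r : ℝ} (hr : |r| ≤ 1) : 1 ≤ E r := by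
  have hr2 : r ^ 2 ≤ 1 := (sq_le_one_iff_abs_le_one r).2 hr
  calc (1 : ℝ) = ∫ θ in (0 : ℝ)..π / 2, cos θ := by simp
    _ ≤ E r := by
      refine intervalIntegral.integral_mono_on (by positivity)
        (continuous_cos.intervalIntegrable _ _) ((by fun_prop : Continuous _).intervalIntegrable _ _)
        fun θ hθ => ?_
      have hcos : 0 ≤ cos θ := cos_nonneg_of_mem_Icc ⟨by linarith [hθ.1, pi_pos], hθ.2⟩
      rw [← sqrt_sq hcos, cos_sq']
      gcongr
      nlinarith [sin_sq_le_one θ, sq_nonneg (sin θ)]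

theorem E_lt_K {r : ℝ} (hr0 : r ≠ 0) (hr : |r| < 1) : E r < K r := by
  have hq := one_sub_sq_mul_sin_sq_pos hr
  refine intervalIntegral.integral_lt_integral_of_continuousOn_of_le_of_exists_lt (by positivity)
    (by fun_prop) (continuous_one_div_sqrt_one_sub_sq_mul_sin_sq hr).continuousOn
    (fun θ _ => ?_) ⟨π / 2, ⟨by positivity, le_rfl⟩, ?_⟩
  · rw [le_div_iff₀ (sqrt_pos.2 (hq θ)), mul_self_sqrt (hq θ).le]
    nlinarith [sq_nonneg r, sq_nonneg (sin θ)]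
  · rw [lt_div_iff₀ (sqrt_pos.2 (hq _)), mul_self_sqrt (hq _).le, sin_pi_div_two]
    nlinarith [pow_pos (abs_pos.2 hr0) 2, sq_abs r]

theorem one_sub_sq_mul_K_lt_E {r : ℝ} (hr0 : r ≠ 0) (hr : |r| < 1) : (1 - r ^ 2) * K r < E r := by
  have hq := one_sub_sq_mul_sin_sq_pos hr
  rw [K, ← intervalIntegral.integral_const_mul]
  refine intervalIntegral.integral_lt_integral_of_continuousOn_of_le_of_exists_lt (by positivity)
    ((continuous_one_div_sqrt_one_sub_sq_mul_sin_sq hr).const_mul _).continuousOn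
    (by fun_prop) (fun θ _ => ?_) ⟨0, ⟨le_rfl, by positivity⟩, ?_⟩
  · rw [mul_one_div, div_le_iff₀ (sqrt_pos.2 (hq θ)), mul_self_sqrt (hq θ).le]
    nlinarith [sin_sq_le_one θ, sq_nonneg r]
  · rw [mul_one_div, div_lt_iff₀ (sqrt_pos.2 (hq _)), mul_self_sqrt (hq _).le, sin_zero]
    nlinarith [pow_pos (abs_pos.2 hr0) 2, sq_abs r]

theorem K_le {r : ℝ} (hr : |r| < 1) : K r ≤ π / 2 / √(1 - r ^ 2) := by
  have hr2 : 0 < 1 - r ^ 2 := one_sub_sq_pos hr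
  calc K r ≤ ∫ _ in (0 : ℝ)..π / 2, 1 / √(1 - r ^ 2) := by
        refine intervalIntegral.integral_mono_on (by positivity)
          ((continuous_one_div_sqrt_one_sub_sq_mul_sin_sq hr).intervalIntegrable _ _)
          intervalIntegrable_const fun θ _ => ?_
        gcongr
        nlinarith [sin_sq_le_one θ, sq_nonneg r]
    _ = π / 2 / √(1 - r ^ 2) := by simp [div_eq_mul_inv]

noncomputable def f₁ (r : ℝ) : ℝ := (1 - r ^ 2) * K r / E r

theorem hasDerivAt_f₁ {r : ℝ} (hr0 : r ≠ 0) (hr : |r| < 1) :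
    HasDerivAt f₁ ((E r ^ 2 - 2 * K r * E r + (1 - r ^ 2) * K r ^ 2) / (r * E r ^ 2)) r := by
  have hE : E r ≠ 0 := (one_pos.trans_le (one_le_E hr.le)).ne'
  have hr2 : 1 - r ^ 2 ≠ 0 := (one_sub_sq_pos hr).ne'
  have h := ((((hasDerivAt_pow 2 r).const_sub 1).mul (hasDerivAt_K hr0 hr)).div
    (hasDerivAt_E hr0 hr) hE)
  refine h.congr_deriv ?_
  simp only [Pi.mul_apply]
  field_simp
  ring

theorem deriv_f₁_neg {r : ℝ} (hr : r ∈ Ioo 0 1) : deriv f₁ r < 0 := by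
  have habs : |r| < 1 := (abs_of_pos hr.1).trans_lt hr.2
  have hE := one_le_E habs.le
  have hEK := E_lt_K hr.1.ne' habs
  have hKE := one_sub_sq_mul_K_lt_E hr.1.ne' habs
  rw [(hasDerivAt_f₁ hr.1.ne' habs).deriv]
  refine div_neg_of_neg_of_pos ?_ (by have := hr.1; positivity)
  nlinarith [mul_lt_mul_of_pos_left hEK (one_pos.trans_le hE),
    mul_lt_mul_of_pos_left hKE ((one_pos.trans_le hE).trans hEK)]

theorem continuousOn_f₁ : ContinuousOn f₁ (Ioo (0 : ℝ) 1) := fun _ hr =>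
  (hasDerivAt_f₁ hr.1.ne' ((abs_of_pos hr.1).trans_lt hr.2)).continuousAt.continuousWithinAt

theorem strictAntiOn_f₁ : StrictAntiOn f₁ (Ioo (0 : ℝ) 1) :=
  strictAntiOn_of_deriv_neg (convex_Ioo (0 : ℝ) 1) continuousOn_f₁ fun r hr =>
    deriv_f₁_neg (by rwa [interior_Ioo] at hr)

theorem f₁_mem_Ioo {r : ℝ} (hr0 : r ≠ 0) (hr : |r| < 1) : f₁ r ∈ Ioo 0 1 := by
  have hE := one_pos.trans_le (one_le_E hr.le)
  have hK := hE.trans (E_lt_K hr0 hr)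
  have hr2 : 0 < 1 - r ^ 2 := one_sub_sq_pos hr
  exact ⟨by unfold f₁; positivity, (div_lt_one hE).2 (one_sub_sq_mul_K_lt_E hr0 hr)⟩

theorem one_sub_sq_le_f₁ {r : ℝ} (hr0 : r ≠ 0) (hr : |r| < 1) : 1 - r ^ 2 ≤ f₁ r := by
  have hE := one_pos.trans_le (one_le_E hr.le)
  have hr2 : 0 < 1 - r ^ 2 := one_sub_sq_pos hr
  rw [f₁, le_div_iff₀ hE]
  exact mul_le_mul_of_nonneg_left (E_lt_K hr0 hr).le hr2.le

theorem f₁_le {r : ℝ} (hr0 : r ≠ 0) (hr : |r| < 1) : f₁ r ≤ π / 2 * √(1 - r ^ 2) := by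
  have hE := one_le_E hr.le
  have hK := (one_pos.trans_le hE).trans (E_lt_K hr0 hr)
  have hr2 : 0 < 1 - r ^ 2 := one_sub_sq_pos hr
  calc f₁ r ≤ (1 - r ^ 2) * K r := div_le_self (by positivity) hE
    _ ≤ (1 - r ^ 2) * (π / 2 / √(1 - r ^ 2)) := by gcongr; exact K_le hr
    _ = π / 2 * √(1 - r ^ 2) := by rw [mul_div_left_comm, div_sqrt]

theorem tendsto_f₁_nhdsGT_zero : Tendsto f₁ (𝓝[>] 0) (𝓝 1) := by
  have hlow : Tendsto (fun r : ℝ => 1 - r ^ 2) (𝓝[>] 0) (𝓝 1) :=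
    ((by fun_prop : Continuous fun r : ℝ => 1 - r ^ 2).tendsto' 0 1 (by simp)).mono_left
      nhdsWithin_le_nhds
  refine tendsto_of_tendsto_of_tendsto_of_le_of_le' hlow tendsto_const_nhds ?_ ?_ <;>
    filter_upwards [Ioo_mem_nhdsGT zero_lt_one] with r hr
  · exact one_sub_sq_le_f₁ hr.1.ne' ((abs_of_pos hr.1).trans_lt hr.2)
  · exact (f₁_mem_Ioo hr.1.ne' ((abs_of_pos hr.1).trans_lt hr.2)).2.le

theorem tendsto_f₁_nhdsLT_one : Tendsto f₁ (𝓝[<] 1) (𝓝 0) := by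
  have hup : Tendsto (fun r : ℝ => π / 2 * √(1 - r ^ 2)) (𝓝[<] 1) (𝓝 0) :=
    ((by fun_prop : Continuous fun r : ℝ => π / 2 * √(1 - r ^ 2)).tendsto' 1 0 (by simp)).mono_left
      nhdsWithin_le_nhds
  refine tendsto_of_tendsto_of_tendsto_of_le_of_le' tendsto_const_nhds hup ?_ ?_ <;>
    filter_upwards [Ioo_mem_nhdsLT zero_lt_one] with r hr
  · exact (f₁_mem_Ioo hr.1.ne' ((abs_of_pos hr.1).trans_lt hr.2)).1.le
  · exact f₁_le hr.1.ne' ((abs_of_pos hr.1).trans_lt hr.2)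

theorem image_f₁_Ioo : f₁ '' Ioo 0 1 = Ioo 0 1 := by
  refine Subset.antisymm ?_ ?_
  · rintro _ ⟨r, hr, rfl⟩
    exact f₁_mem_Ioo hr.1.ne' ((abs_of_pos hr.1).trans_lt hr.2)
  exact isPreconnected_Ioo.intermediate_value_Ioo
    (le_principal_iff.2 (Ioo_mem_nhdsLT zero_lt_one))
    (le_principal_iff.2 (Ioo_mem_nhdsGT zero_lt_one))
    continuousOn_f₁ tendsto_f₁_nhdsLT_one tendsto_f₁_nhdsGT_zero

theorem stmt_8 :
    StrictAntiOn (fun r : ℝ => (1 - r^2) * K r / E r) (Set.Ioo (0:ℝ) 1) ∧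
    (fun r : ℝ => (1 - r^2) * K r / E r) '' Set.Ioo (0:ℝ) 1 = Set.Ioo (0:ℝ) 1 :=
  ⟨strictAntiOn_f₁, image_f₁_Ioo⟩
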